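/- arXiv:2506.10538 — 2 statements merged into one kernel-verified Lean document; each statement's English description precedes it below -/
import Mathlib

section
/- Uniqueness for the one-sided boundary value problem (Proposition 2.6). Let q ≥ 0, a < b, and g : ℝ → ℝ. Suppose h₁, h₂ : ℝ → ℝ are Borel measurable, continuous on (−∞,b], twice differentiable at every point of (a,b) with y ↦ hᵢ(x+y) − hᵢ(x) Π-integrable for every x ∈ (a,b), and both satisfy the boundary value problem: ℒhᵢ(x) − q·hᵢ(x) = 0 for all x ∈ (a,b); hᵢ(x) = g(x) for all x ≤ a; and hᵢ(b) = g(b). Then h₁(x) = h₂(x) for all x ∈ (−∞,b]. -/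
/-!
Comparison principle for `ℒ - q`. If `u = h₁ - h₂` were positive somewhere on `(-∞, b]`, take
the leftmost point `m` where it attains its (positive) maximum; it lies in `(a, b)`. There
`u'(m) = 0`, `u''(m) ≤ 0` and the jump integral `∫ (u(m+y) - u(m)) ν(dy)` is `≤ 0`, while
`ℒu(m) = q u(m) ≥ 0`. So the jump integral vanishes, and since `ν` charges `(-∞, 0)` the maximum
is also attained at some `m + y` with `y < 0`, contradicting the choice of `m`.
-/

open MeasureTheory Set Filter Topology

/-- Generator of a spectrally negative Lévy process with drift `δ`,
Gaussian coefficient `σ` and Lévy measure `ν` concentrated on `(-∞,0)`: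
`ℒf(x) = δ f'(x) + (σ²/2) f''(x) + ∫_{(-∞,0)} (f(x+y) - f(x)) ν(dy)`. -/
noncomputable def gen (δ σ : ℝ) (ν : Measure ℝ) (f : ℝ → ℝ) (x : ℝ) : ℝ :=
  δ * deriv f x + σ ^ 2 / 2 * deriv (deriv f) x +
    ∫ y in Iio (0 : ℝ), (f (x + y) - f x) ∂ν

theorem IsLocalMax.deriv_deriv_nonpos {f : ℝ → ℝ} {x : ℝ} (hmax : IsLocalMax f x)
    (hc : ContinuousAt f x) : deriv (deriv f) x ≤ 0 := by
  by_contra! hpos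
  -- A positive second derivative makes `x` also a local minimum, so `f` is locally constant.
  have hmin := isLocalMin_of_deriv_deriv_pos hpos hmax.deriv_eq_zero hc
  have hconst : f =ᶠ[𝓝 x] fun _ => f x := by
    filter_upwards [hmax, hmin] with y hle hge using le_antisymm hle hge
  have hderiv : deriv f =ᶠ[𝓝 x] fun _ => 0 := by
    simpa only [deriv_const'] using hconst.deriv
  rw [hderiv.deriv_eq, deriv_const'] at hpos
  exact hpos.false

theorem exists_eq_zero_of_nonpos_of_setIntegral_nonneg {α : Type*} [MeasurableSpace α]
    {μ : Measure α} {s : Set α} {φ : α → ℝ} (hs : MeasurableSet s) (hμs : μ s ≠ 0)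
    (hφ : ∀ y ∈ s, φ y ≤ 0) (hint : IntegrableOn φ s μ) (h : 0 ≤ ∫ y in s, φ y ∂μ) :
    ∃ y ∈ s, φ y = 0 := by
  have hzero : ∫ y in s, -φ y ∂μ = 0 := by
    rw [integral_neg]
    linarith [setIntegral_nonpos (μ := μ) hs hφ]
  have hae : ∀ᵐ y ∂μ.restrict s, -φ y = 0 :=
    (setIntegral_eq_zero_iff_of_nonneg_ae
      (ae_restrict_of_forall_mem hs fun y hy => neg_nonneg.2 (hφ y hy)) hint.neg).1 hzero
  have := ae_restrict_neBot.2 hμs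
  obtain ⟨y, hy, hys⟩ := (hae.and (ae_restrict_mem hs)).exists
  exact ⟨y, hys, neg_eq_zero.1 hy⟩

theorem exists_leftmost_isMaxOn_Iic {u : ℝ → ℝ} {a b x₀ : ℝ} (hc : ContinuousOn u (Iic b))
    (ha : ∀ x ≤ a, u x ≤ 0) (hb : u b ≤ 0) (hx₀ : x₀ ≤ b) (hpos : 0 < u x₀) :
    ∃ m ∈ Ioo a b, 0 < u m ∧ IsMaxOn u (Iic b) m ∧ ∀ x < m, u x < u m := by
  have hax₀ : a < x₀ := lt_of_not_ge fun h => (ha x₀ h).not_gt hpos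
  have hcK : ContinuousOn u (Icc a b) := hc.mono Icc_subset_Iic_self
  obtain ⟨z, hzK, hz⟩ :=
    isCompact_Icc.exists_isMaxOn (nonempty_Icc.2 (hax₀.trans_le hx₀).le) hcK
  have hMpos : 0 < u z := hpos.trans_le (hz ⟨hax₀.le, hx₀⟩)
  have hmaxz : IsMaxOn u (Iic b) z := fun x (hx : x ≤ b) => by
    rcases le_or_gt x a with hxa | hxa
    · exact (ha x hxa).trans hMpos.le
    · exact hz ⟨hxa.le, hx⟩
  set S := Icc a b ∩ u ⁻¹' {u z}
  have hSbdd : BddBelow S := ⟨a, fun x hx => hx.1.1⟩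
  have hmS : sInf S ∈ S :=
    (hcK.preimage_isClosed_of_isClosed isClosed_Icc isClosed_singleton).csInf_mem
      ⟨z, hzK, rfl⟩ hSbdd
  obtain ⟨⟨haS, hSb⟩, hum : u (sInf S) = u z⟩ := hmS
  have hma : a < sInf S := haS.lt_of_ne fun h => (ha a le_rfl).not_gt (h ▸ hum ▸ hMpos)
  have hmb : sInf S < b := hSb.lt_of_ne fun h => hb.not_gt (h ▸ hum ▸ hMpos)
  refine ⟨sInf S, ⟨hma, hmb⟩, hum ▸ hMpos, fun x hx => hum ▸ hmaxz hx, fun x hx => ?_⟩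
  rcases le_or_gt x a with hxa | hxa
  · exact (ha x hxa).trans_lt (hum ▸ hMpos)
  · refine (hum ▸ hmaxz (hx.trans hmb).le).lt_of_ne fun hux => ?_
    exact (csInf_le hSbdd ⟨⟨hxa.le, (hx.trans hmb).le⟩, hux.trans hum⟩).not_gt hx

section Generator

variable {δ σ : ℝ} {ν : Measure ℝ}

theorem gen_sub {f₁ f₂ : ℝ → ℝ} {x : ℝ}
    (hf₁ : ∀ᶠ y in 𝓝 x, DifferentiableAt ℝ f₁ y) (hf₂ : ∀ᶠ y in 𝓝 x, DifferentiableAt ℝ f₂ y)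
    (hf₁' : DifferentiableAt ℝ (deriv f₁) x) (hf₂' : DifferentiableAt ℝ (deriv f₂) x)
    (hi₁ : IntegrableOn (fun y => f₁ (x + y) - f₁ x) (Iio 0) ν)
    (hi₂ : IntegrableOn (fun y => f₂ (x + y) - f₂ x) (Iio 0) ν) :
    gen δ σ ν (f₁ - f₂) x = gen δ σ ν f₁ x - gen δ σ ν f₂ x := by
  have hderiv : deriv (f₁ - f₂) =ᶠ[𝓝 x] deriv f₁ - deriv f₂ := by
    filter_upwards [hf₁, hf₂] with y h₁ h₂ using deriv_sub h₁ h₂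
  have hjump : ∫ y in Iio 0, ((f₁ - f₂) (x + y) - (f₁ - f₂) x) ∂ν =
      (∫ y in Iio 0, (f₁ (x + y) - f₁ x) ∂ν) - ∫ y in Iio 0, (f₂ (x + y) - f₂ x) ∂ν := by
    rw [← integral_sub hi₁ hi₂]
    congr 1 with y
    simp only [Pi.sub_apply]
    ring
  rw [gen, gen, gen, hjump, hderiv.eq_of_nhds, hderiv.deriv_eq, Pi.sub_apply,
    deriv_sub hf₁' hf₂']
  ring

theorem le_zero_of_gen_sub_mul_nonneg {q a b : ℝ} {u : ℝ → ℝ} (hν : ν (Iio 0) ≠ 0)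
    (hq : 0 ≤ q) (hc : ContinuousOn u (Iic b))
    (hi : ∀ x ∈ Ioo a b, IntegrableOn (fun y => u (x + y) - u x) (Iio 0) ν)
    (hsub : ∀ x ∈ Ioo a b, 0 ≤ gen δ σ ν u x - q * u x)
    (ha : ∀ x ≤ a, u x ≤ 0) (hb : u b ≤ 0) :
    ∀ x ≤ b, u x ≤ 0 := by
  by_contra! ⟨x₀, hx₀, hpos⟩
  obtain ⟨m, hm, hMpos, hmax, hleft⟩ := exists_leftmost_isMaxOn_Iic hc ha hb hx₀ hpos
  have hloc : IsLocalMax u m := hmax.isLocalMax (Iic_mem_nhds hm.2)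
  have hd2 : σ ^ 2 / 2 * deriv (deriv u) m ≤ 0 :=
    mul_nonpos_of_nonneg_of_nonpos (by positivity)
      (hloc.deriv_deriv_nonpos (hc.continuousAt (Iic_mem_nhds hm.2)))
  have hjump : 0 ≤ ∫ y in Iio 0, (u (m + y) - u m) ∂ν := by
    have := hsub m hm
    rw [gen, hloc.deriv_eq_zero] at this
    nlinarith [mul_nonneg hq hMpos.le]
  have hjump_le : ∀ y ∈ Iio (0 : ℝ), u (m + y) - u m ≤ 0 := fun y (hy : y < 0) =>
    sub_nonpos.2 (hmax (show m + y ≤ b by linarith [hm.2]))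
  obtain ⟨y, hy, hyeq⟩ :=
    exists_eq_zero_of_nonpos_of_setIntegral_nonneg measurableSet_Iio hν hjump_le (hi m hm) hjump
  exact (hleft (m + y) (by linarith [show y < 0 from hy])).ne (sub_eq_zero.1 hyeq)

theorem le_of_gen_sub_mul_le {q a b : ℝ} {h₁ h₂ : ℝ → ℝ} (hν : ν (Iio 0) ≠ 0) (hq : 0 ≤ q)
    (hc₁ : ContinuousOn h₁ (Iic b)) (hc₂ : ContinuousOn h₂ (Iic b))
    (hd₁ : ∀ x ∈ Ioo a b, DifferentiableAt ℝ h₁ x ∧ DifferentiableAt ℝ (deriv h₁) x)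
    (hd₂ : ∀ x ∈ Ioo a b, DifferentiableAt ℝ h₂ x ∧ DifferentiableAt ℝ (deriv h₂) x)
    (hi₁ : ∀ x ∈ Ioo a b, IntegrableOn (fun y => h₁ (x + y) - h₁ x) (Iio 0) ν)
    (hi₂ : ∀ x ∈ Ioo a b, IntegrableOn (fun y => h₂ (x + y) - h₂ x) (Iio 0) ν)
    (hgen : ∀ x ∈ Ioo a b, gen δ σ ν h₂ x - q * h₂ x ≤ gen δ σ ν h₁ x - q * h₁ x)
    (ha : ∀ x ≤ a, h₁ x ≤ h₂ x) (hb : h₁ b ≤ h₂ b) :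
    ∀ x ≤ b, h₁ x ≤ h₂ x := by
  have hsub : ∀ x ∈ Ioo a b, 0 ≤ gen δ σ ν (h₁ - h₂) x - q * (h₁ - h₂) x := by
    intro x hx
    have hnhds := isOpen_Ioo.mem_nhds hx
    rw [gen_sub (eventually_of_mem hnhds fun y hy => (hd₁ y hy).1)
      (eventually_of_mem hnhds fun y hy => (hd₂ y hy).1) (hd₁ x hx).2 (hd₂ x hx).2
      (hi₁ x hx) (hi₂ x hx), Pi.sub_apply]
    linarith [hgen x hx]
  have hi : ∀ x ∈ Ioo a b, IntegrableOn (fun y => (h₁ - h₂) (x + y) - (h₁ - h₂) x) (Iio 0) ν :=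
    fun x hx => ((hi₁ x hx).sub (hi₂ x hx)).congr_fun
      (fun y _ => by simp only [Pi.sub_apply]; ring) measurableSet_Iio
  intro x hx
  exact sub_nonpos.1 <| le_zero_of_gen_sub_mul_nonneg hν hq (hc₁.sub hc₂) hi hsub
    (fun x hx => sub_nonpos.2 (ha x hx)) (sub_nonpos.2 hb) x hx

end Generator

theorem stmt3_general
    (δ σ : ℝ)
    (ν : Measure ℝ) (hν0 : ν ≠ 0) (hνsupp : ν (Ici (0 : ℝ)) = 0)
    (q : ℝ) (hq : 0 ≤ q) (a b : ℝ) (g h₁ h₂ : ℝ → ℝ)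
    (hc1 : ContinuousOn h₁ (Iic b)) (hc2 : ContinuousOn h₂ (Iic b))
    (hd1 : ∀ x ∈ Ioo a b, DifferentiableAt ℝ h₁ x ∧ DifferentiableAt ℝ (deriv h₁) x)
    (hd2 : ∀ x ∈ Ioo a b, DifferentiableAt ℝ h₂ x ∧ DifferentiableAt ℝ (deriv h₂) x)
    (hi1 : ∀ x ∈ Ioo a b, IntegrableOn (fun y => h₁ (x + y) - h₁ x) (Iio (0 : ℝ)) ν)
    (hi2 : ∀ x ∈ Ioo a b, IntegrableOn (fun y => h₂ (x + y) - h₂ x) (Iio (0 : ℝ)) ν)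
    (heq1 : ∀ x ∈ Ioo a b, gen δ σ ν h₁ x - q * h₁ x = 0)
    (heq2 : ∀ x ∈ Ioo a b, gen δ σ ν h₂ x - q * h₂ x = 0)
    (hbd1 : ∀ x ≤ a, h₁ x = g x) (hbd2 : ∀ x ≤ a, h₂ x = g x)
    (hb1 : h₁ b = g b) (hb2 : h₂ b = g b) :
    ∀ x ≤ b, h₁ x = h₂ x := by
  have hν : ν (Iio 0) ≠ 0 := fun hIio => hν0 <| Measure.measure_univ_eq_zero.1 <| by
    rw [← Iio_union_Ici (a := (0 : ℝ))]
    exact measure_union_null hIio hνsupp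
  have hbd : ∀ x ≤ a, h₁ x = h₂ x := fun x hx => (hbd1 x hx).trans (hbd2 x hx).symm
  have hb : h₁ b = h₂ b := hb1.trans hb2.symm
  have hgen : ∀ x ∈ Ioo a b, gen δ σ ν h₁ x - q * h₁ x = gen δ σ ν h₂ x - q * h₂ x :=
    fun x hx => (heq1 x hx).trans (heq2 x hx).symm
  intro x hx
  exact le_antisymm
    (le_of_gen_sub_mul_le hν hq hc1 hc2 hd1 hd2 hi1 hi2 (fun x hx => (hgen x hx).ge)
      (fun x hx => (hbd x hx).le) hb.le x hx)
    (le_of_gen_sub_mul_le hν hq hc2 hc1 hd2 hd1 hi2 hi1 (fun x hx => (hgen x hx).le)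
      (fun x hx => (hbd x hx).ge) hb.ge x hx)

/-- Uniqueness for the one-sided boundary value problem (Proposition 2.6):
two solutions of `(ℒ - q)h = 0` on `(a,b)` with `h = g` on `(-∞,a]` and `h(b) = g(b)`
coincide on `(-∞,b]`. -/
theorem stmt3
    (δ σ : ℝ) (hσ : 0 ≤ σ)
    (ν : Measure ℝ) (hν0 : ν ≠ 0) (hνsupp : ν (Ici (0 : ℝ)) = 0)
    (hνint : IntegrableOn (fun y => min 1 |y|) (Iio (0 : ℝ)) ν)
    (q : ℝ) (hq : 0 ≤ q) (a b : ℝ) (hab : a < b) (g h₁ h₂ : ℝ → ℝ)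
    (hm1 : Measurable h₁) (hm2 : Measurable h₂)
    (hc1 : ContinuousOn h₁ (Iic b)) (hc2 : ContinuousOn h₂ (Iic b))
    (hd1 : ∀ x ∈ Ioo a b, DifferentiableAt ℝ h₁ x ∧ DifferentiableAt ℝ (deriv h₁) x)
    (hd2 : ∀ x ∈ Ioo a b, DifferentiableAt ℝ h₂ x ∧ DifferentiableAt ℝ (deriv h₂) x)
    (hi1 : ∀ x ∈ Ioo a b, IntegrableOn (fun y => h₁ (x + y) - h₁ x) (Iio (0 : ℝ)) ν)
    (hi2 : ∀ x ∈ Ioo a b, IntegrableOn (fun y => h₂ (x + y) - h₂ x) (Iio (0 : ℝ)) ν)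
    (heq1 : ∀ x ∈ Ioo a b, gen δ σ ν h₁ x - q * h₁ x = 0)
    (heq2 : ∀ x ∈ Ioo a b, gen δ σ ν h₂ x - q * h₂ x = 0)
    (hbd1 : ∀ x ≤ a, h₁ x = g x) (hbd2 : ∀ x ≤ a, h₂ x = g x)
    (hb1 : h₁ b = g b) (hb2 : h₂ b = g b) :
    ∀ x ≤ b, h₁ x = h₂ x :=
  stmt3_general δ σ ν hν0 hνsupp q hq a b g h₁ h₂ hc1 hc2 hd1 hd2 hi1 hi2 heq1 heq2 hbd1 hbd2 hb1
    hb2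
end

section
/- Propagation of nonpositivity for harmonic functions on a half-line (intermediate claim in the proof of Proposition 5.5(II)). Let α ∈ ℝ and let h : ℝ → ℝ be Borel measurable, continuous on [α,∞), differentiable on a neighborhood of every point of (α,∞) with h′ differentiable on (α,∞), and with y ↦ h(x+y) − h(x) Π-integrable for every x > α. Assume ℒh(x) = 0 for all x ∈ (α,∞), h(x) ≥ 0 for all x ≤ α, and h(y) < 0 for some y > α. Then h(x) ≤ 0 for all x ≥ y. -/
open MeasureTheory Set Filter Topology

theorem exists_leftmost_isMinOn_Icc {f : ℝ → ℝ} {a b : ℝ} (hab : a ≤ b)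
    (hf : ContinuousOn f (Icc a b)) :
    ∃ c ∈ Icc a b, IsMinOn f (Icc a b) c ∧ ∀ z ∈ Ico a c, f c < f z := by
  obtain ⟨c₀, hc₀, hmin⟩ := isCompact_Icc.exists_isMinOn (nonempty_Icc.2 hab) hf
  set S := Icc a b ∩ f ⁻¹' {f c₀}
  have hS : IsClosed S := hf.preimage_isClosed_of_isClosed isClosed_Icc isClosed_singleton
  have hSbdd : BddBelow S := ⟨a, fun z hz => hz.1.1⟩
  obtain ⟨hcI, hcval⟩ : sInf S ∈ S := hS.csInf_mem ⟨c₀, hc₀, rfl⟩ hSbdd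
  refine ⟨sInf S, hcI, fun z hz => hcval ▸ hmin hz, fun z hz => ?_⟩
  have hzI : z ∈ Icc a b := ⟨hz.1, hz.2.le.trans hcI.2⟩
  refine (hcval ▸ hmin hzI : f (sInf S) ≤ f z).lt_of_ne fun heq => ?_
  exact hz.2.not_ge (csInf_le hSbdd ⟨hzI, heq.symm.trans hcval⟩)

theorem IsLocalMin.deriv_deriv_nonneg {f : ℝ → ℝ} {c : ℝ} (hmin : IsLocalMin f c)
    (hc : ContinuousAt f c) : 0 ≤ deriv (deriv f) c := by
  by_contra! hneg
  -- The second derivative test makes `c` a local maximum too, so `f` is constant near `c`.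
  have hmax : IsLocalMax f c := isLocalMax_of_deriv_deriv_neg hneg hmin.deriv_eq_zero hc
  have hconst : f =ᶠ[𝓝 c] fun _ => f c := by
    filter_upwards [hmin, hmax] with z hz₁ hz₂ using le_antisymm hz₂ hz₁
  have hderiv : deriv f =ᶠ[𝓝 c] fun _ => 0 := by
    filter_upwards [hconst.eventuallyEq_nhds] with z hz
    rw [hz.deriv_eq, deriv_const]
  rw [hderiv.deriv_eq, deriv_const] at hneg
  exact lt_irrefl 0 hneg

theorem gen_pos_of_isLocalMin_of_lt_left {δ σ : ℝ} {ν : Measure ℝ} {f : ℝ → ℝ} {c : ℝ}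
    (hmin : IsLocalMin f c) (hc : ContinuousAt f c) (hleft : ∀ z < c, f c < f z)
    (hint : IntegrableOn (fun y => f (c + y) - f c) (Iio 0) ν) (hν : ν (Iio 0) ≠ 0) :
    0 < gen δ σ ν f c := by
  have hpos : ∀ y ∈ Iio (0 : ℝ), 0 < f (c + y) - f c := fun y hy =>
    sub_pos.2 (hleft _ (add_lt_of_neg_right c hy))
  have hjump : 0 < ∫ y in Iio (0 : ℝ), (f (c + y) - f c) ∂ν := by
    rw [setIntegral_pos_iff_support_of_nonneg_ae
      ((ae_restrict_mem measurableSet_Iio).mono fun y hy => (hpos y hy).le) hint,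
      inter_eq_right.2 fun y hy => Function.mem_support.2 (hpos y hy).ne']
    exact pos_iff_ne_zero.2 hν
  have hdiffusion : 0 ≤ σ ^ 2 / 2 * deriv (deriv f) c :=
    mul_nonneg (by positivity) (hmin.deriv_deriv_nonneg hc)
  rw [gen, hmin.deriv_eq_zero, mul_zero, zero_add]
  exact add_pos_of_nonneg_of_pos hdiffusion hjump

theorem stmt11_general
    (δ σ : ℝ)
    (ν : Measure ℝ) (hν0 : ν ≠ 0) (hνsupp : ν (Ici (0 : ℝ)) = 0)
    (α : ℝ) (h : ℝ → ℝ)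
    (hcont : ContinuousOn h (Ici α))
    (hint : ∀ x ∈ Ioi α, IntegrableOn (fun y => h (x + y) - h x) (Iio (0 : ℝ)) ν)
    (hharm : ∀ x ∈ Ioi α, gen δ σ ν h x = 0)
    (hnn : ∀ x ≤ α, 0 ≤ h x)
    (y : ℝ) (hy : α < y) (hyneg : h y < 0) :
    ∀ x, y ≤ x → h x ≤ 0 := by
  intro x hyx
  by_contra! hx
  have hν : ν (Iio 0) ≠ 0 := fun h0 => hν0 <| Measure.measure_univ_eq_zero.1 <| by
    rw [← Iio_union_Ici (a := (0 : ℝ))]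
    exact measure_union_null h0 hνsupp
  obtain ⟨c, hcI, hcmin, hcleft⟩ :=
    exists_leftmost_isMinOn_Icc (hy.le.trans hyx) (hcont.mono Icc_subset_Ici_self)
  have hcneg : h c < 0 := (hcmin ⟨hy.le, hyx⟩).trans_lt hyneg
  have hαc : α < c := lt_of_not_ge fun hc => (hnn c hc).not_gt hcneg
  have hcx : c < x := hcI.2.lt_of_ne (by rintro rfl; linarith)
  have hleft : ∀ z < c, h c < h z := fun z hz => by
    rcases le_or_gt z α with hzα | hαz
    · exact hcneg.trans_le (hnn z hzα)
    · exact hcleft z ⟨hαz.le, hz⟩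
  exact (gen_pos_of_isLocalMin_of_lt_left (hcmin.isLocalMin (Icc_mem_nhds hαc hcx))
    (hcont.continuousAt (Ici_mem_nhds hαc)) hleft (hint c hαc) hν).ne' (hharm c hαc)

/-- Propagation of nonpositivity for harmonic functions on a half-line:
if `ℒh = 0` on `(α,∞)`, `h ≥ 0` on `(-∞,α]`, and `h(y) < 0` for some `y > α`,
then `h ≤ 0` on `[y,∞)`. -/
theorem stmt11
    (δ σ : ℝ) (hσ : 0 ≤ σ)
    (ν : Measure ℝ) (hν0 : ν ≠ 0) (hνsupp : ν (Ici (0 : ℝ)) = 0)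
    (hνint : IntegrableOn (fun y => min 1 |y|) (Iio (0 : ℝ)) ν)
    (α : ℝ) (h : ℝ → ℝ)
    (hmeas : Measurable h)
    (hcont : ContinuousOn h (Ici α))
    (hdiff : ∀ x ∈ Ioi α, ∀ᶠ z in 𝓝 x, DifferentiableAt ℝ h z)
    (hdiff' : ∀ x ∈ Ioi α, DifferentiableAt ℝ (deriv h) x)
    (hint : ∀ x ∈ Ioi α, IntegrableOn (fun y => h (x + y) - h x) (Iio (0 : ℝ)) ν)
    (hharm : ∀ x ∈ Ioi α, gen δ σ ν h x = 0)
    (hnn : ∀ x ≤ α, 0 ≤ h x)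
    (y : ℝ) (hy : α < y) (hyneg : h y < 0) :
    ∀ x, y ≤ x → h x ≤ 0 :=
  stmt11_general δ σ ν hν0 hνsupp α h hcont hint hharm hnn y hy hyneg
end
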